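/- Let 0 < a₁ < a₂ < a₃, a, b, c ∈ ℝ, λ < 0, ε > 0, x₀ = (a/(λ−a₁), b/(λ−a₂), c/(λ−a₃)), m(x) = (a₁x₁ + a, a₂x₂ + b, a₃x₃ + c), and K(z) = ½(a₁z₁² + a₂z₂² + a₃z₃²) − (λ/2)‖z‖². If x : ℝ → ℝ³ is a differentiable solution of ẋ = x × m(x) + ε (x × m(x)) × m(x) and z(t) = x(t) − x₀, then d/dt K(z(t)) = ε λ ‖x(t) × m(x(t))‖² ≤ 0. -/

import Mathlib

noncomputable def cross (u v : EuclideanSpace ℝ (Fin 3)) : EuclideanSpace ℝ (Fin 3) :=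
  WithLp.toLp 2 ![u 1 * v 2 - u 2 * v 1, u 2 * v 0 - u 0 * v 2, u 0 * v 1 - u 1 * v 0]

/-! With `z = x - x₀`, the equilibrium identity `m x₀ = lam • x₀` makes the gradient of `K` at `z`
equal to `m x - lam • x`. As `x × m` is orthogonal to `x` and to `m`, only the damping term
contributes to `⟪m - lam • x, ẋ⟫`, and `⟪x, (x × m) × m⟫ = -‖x × m‖²` by the triple product. -/

open Matrix
open scoped InnerProductSpace

local notation "ℝ³" => EuclideanSpace ℝ (Fin 3)

theorem cross_eq_toLp_crossProduct (u v : ℝ³) :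
    cross u v = WithLp.toLp 2 (u.ofLp ⨯₃ v.ofLp) := by
  simp [cross, cross_apply]

theorem inner_cross_eq_dotProduct (u v w : ℝ³) :
    ⟪u, cross v w⟫_ℝ = u.ofLp ⬝ᵥ v.ofLp ⨯₃ w.ofLp := by
  simp [cross_eq_toLp_crossProduct, EuclideanSpace.inner_eq_star_dotProduct, dotProduct_comm]

theorem inner_self_cross (u v : ℝ³) : ⟪u, cross u v⟫_ℝ = 0 := by
  rw [inner_cross_eq_dotProduct, dot_self_cross]

theorem inner_cross_self (u v : ℝ³) : ⟪v, cross u v⟫_ℝ = 0 := by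
  rw [inner_cross_eq_dotProduct, dot_cross_self]

theorem inner_cross_cross_self (u v : ℝ³) : ⟪u, cross (cross u v) v⟫_ℝ = -‖cross u v‖ ^ 2 := by
  rw [← real_inner_self_eq_norm_sq, inner_cross_eq_dotProduct, inner_cross_eq_dotProduct,
    triple_product_permutation, ← cross_anticomm, dotProduct_neg, cross_eq_toLp_crossProduct]

theorem inner_sub_smul_cross_add_smul_cross_cross (x m : ℝ³) (lam ε : ℝ) :
    ⟪m - lam • x, cross x m + ε • cross (cross x m) m⟫_ℝ = ε * lam * ‖cross x m‖ ^ 2 := by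
  simp only [inner_sub_left, inner_add_right, inner_smul_left, inner_smul_right,
    inner_self_cross, inner_cross_self, inner_cross_cross_self, RCLike.conj_to_real]
  ring

theorem HasDerivAt.sum_mul_sq {ι : Type*} [Fintype ι] (w : ι → ℝ) {y : ℝ → EuclideanSpace ℝ ι}
    {y' : EuclideanSpace ℝ ι} {t : ℝ} (hy : HasDerivAt y y' t) :
    HasDerivAt (fun s => ∑ i, w i / 2 * y s i ^ 2)
      ⟪WithLp.toLp 2 (fun i => w i * y t i), y'⟫_ℝ t := by
  have hcoord : HasDerivAt (fun s => (y s).ofLp) y'.ofLp t :=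
    (PiLp.continuousLinearEquiv 2 ℝ fun _ : ι => ℝ).hasFDerivAt.comp_hasDerivAt t hy
  have hterm (i : ι) (_ : i ∈ Finset.univ) :
      HasDerivAt (fun s => w i / 2 * y s i ^ 2) (w i * y t i * y' i) t :=
    (((hasDerivAt_pi.mp hcoord i).fun_pow 2).const_mul (w i / 2)).congr_deriv (by ring)
  refine (HasDerivAt.fun_sum hterm).congr_deriv ?_
  simp [PiLp.inner_apply, mul_comm]

theorem effectiveField_sub_smul_eq {a₁ a₂ a₃ a b c lam : ℝ} (h₁ : lam ≠ a₁) (h₂ : lam ≠ a₂)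
    (h₃ : lam ≠ a₃) {x₀ : ℝ³} (hx₀ : x₀ = ![a / (lam - a₁), b / (lam - a₂), c / (lam - a₃)])
    (x : ℝ³) :
    (WithLp.toLp 2 ![a₁ * x 0 + a, a₂ * x 1 + b, a₃ * x 2 + c] : ℝ³) - lam • x =
      WithLp.toLp 2 fun i => (![a₁, a₂, a₃] i - lam) * (x - x₀) i := by
  have hd₁ : lam - a₁ ≠ 0 := sub_ne_zero.mpr h₁
  have hd₂ : lam - a₂ ≠ 0 := sub_ne_zero.mpr h₂
  have hd₃ : lam - a₃ ≠ 0 := sub_ne_zero.mpr h₃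
  ext i
  fin_cases i <;>
    simp only [Fin.zero_eta, Fin.mk_one, Fin.reduceFinMk, PiLp.sub_apply, PiLp.smul_apply,
      smul_eq_mul, cons_val_zero, cons_val_one, cons_val, hx₀] <;>
    field_simp <;> ring

theorem stmt19 (a₁ a₂ a₃ a b c lam ε : ℝ) (h1 : 0 < a₁) (h12 : a₁ < a₂) (h23 : a₂ < a₃)
    (hlam : lam < 0) (hε : 0 < ε)
    (x₀ : EuclideanSpace ℝ (Fin 3))
    (hx₀ : x₀ = ![a / (lam - a₁), b / (lam - a₂), c / (lam - a₃)])
    (m : EuclideanSpace ℝ (Fin 3) → EuclideanSpace ℝ (Fin 3))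
    (hm : ∀ x : EuclideanSpace ℝ (Fin 3),
      m x = (WithLp.toLp 2 ![a₁ * x 0 + a, a₂ * x 1 + b, a₃ * x 2 + c] : EuclideanSpace ℝ (Fin 3)))
    (K : EuclideanSpace ℝ (Fin 3) → ℝ)
    (hK : ∀ z : EuclideanSpace ℝ (Fin 3),
      K z = (1 / 2) * (a₁ * (z 0) ^ 2 + a₂ * (z 1) ^ 2 + a₃ * (z 2) ^ 2)
        - (lam / 2) * ‖z‖ ^ 2)
    (x : ℝ → EuclideanSpace ℝ (Fin 3))
    (hx : ∀ t : ℝ, HasDerivAt x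
      (cross (x t) (m (x t)) + ε • cross (cross (x t) (m (x t))) (m (x t))) t) :
    ∀ t : ℝ, HasDerivAt (fun s => K (x s - x₀)) (ε * lam * ‖cross (x t) (m (x t))‖ ^ 2) t ∧
      ε * lam * ‖cross (x t) (m (x t))‖ ^ 2 ≤ 0 := by
  intro t
  have hK_sum : ∀ z, K z = ∑ i, (![a₁, a₂, a₃] i - lam) / 2 * z i ^ 2 := fun z => by
    rw [hK, EuclideanSpace.real_norm_sq_eq]
    simp only [Fin.sum_univ_three, cons_val_zero, cons_val_one, cons_val_two, tail_cons, head_cons]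
    ring
  have hgrad :
      m (x t) - lam • x t = WithLp.toLp 2 fun i => (![a₁, a₂, a₃] i - lam) * (x t - x₀) i := by
    rw [hm]
    exact effectiveField_sub_smul_eq (by linarith) (by linarith) (by linarith) hx₀ (x t)
  refine ⟨?_, mul_nonpos_of_nonpos_of_nonneg (mul_nonpos_of_nonneg_of_nonpos hε.le hlam.le)
    (sq_nonneg _)⟩
  rw [← inner_sub_smul_cross_add_smul_cross_cross, hgrad]
  simpa only [hK_sum] using ((hx t).sub_const x₀).sum_mul_sq _
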